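/- Sequential update formula for covariances: let K₀ be symmetric PSD (m×m), let G₁ be p₁×m and G₂ be p₂×m matrices, and τ > 0. Define K₁ = K₀ − K₀G₁ᵀ(G₁K₀G₁ᵀ+τ²I)⁻¹G₁K₀ and K₂ = K₁ − K₁G₂ᵀ(G₂K₁G₂ᵀ+τ²I)⁻¹G₂K₁. Let G = [G₁; G₂] be the (p₁+p₂)×m vertical concatenation. Then K₂ = K₀ − K₀Gᵀ(GK₀Gᵀ + τ²I)⁻¹GK₀; that is, conditioning on the two blocks of observations sequentially yields the same covariance as conditioning on them jointly. -/

import Mathlib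

/-!
Writing `S = G K₀ Gᵀ + τ²I` as a `2 × 2` block matrix, its Schur complement with respect to the
corner `G₁ K₀ G₁ᵀ + τ²I` is exactly `G₂ K₁ G₂ᵀ + τ²I`, the matrix inverted in the second update.
Inverting `S` blockwise by the Schur complement formula and expanding, the joint update splits
into the two sequential ones; no symmetry or positivity enters this identity. Positivity is only
needed for the invertibility of the two corners: `K₁` is positive semidefinite because it is the
Schur complement of the joint covariance `[K₀, K₀G₁ᵀ; G₁K₀, G₁K₀G₁ᵀ + τ²I]` of the state and the
first observation.
-/

open Matrix

section Algebra

variable {R : Type*} [CommRing R] {n p q : Type*} [Fintype n] [Fintype p] [Fintype q]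
  [DecidableEq p] [DecidableEq q]

/-- The covariance of `x` given `H x + ε`, for independent Gaussian `x` and `ε` with covariances
`K` and `N`. -/
noncomputable def posteriorCov (K : Matrix n n R) (H : Matrix p n R) (N : Matrix p p R) :
    Matrix n n R :=
  K - K * Hᵀ * (H * K * Hᵀ + N)⁻¹ * H * K

omit [Fintype p] [Fintype q] [DecidableEq p] [DecidableEq q] in
lemma fromRows_mul_mul_transpose_add_fromBlocks (K : Matrix n n R) (H₁ : Matrix p n R)
    (H₂ : Matrix q n R) (N₁ : Matrix p p R) (N₂ : Matrix q q R) :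
    fromRows H₁ H₂ * K * (fromRows H₁ H₂)ᵀ + fromBlocks N₁ 0 0 N₂ =
      fromBlocks (H₁ * K * H₁ᵀ + N₁) (H₁ * K * H₂ᵀ) (H₂ * K * H₁ᵀ) (H₂ * K * H₂ᵀ + N₂) := by
  rw [transpose_fromRows, fromRows_mul, fromRows_mul_fromCols, fromBlocks_add]
  simp only [add_zero]

lemma inv_fromBlocks₁₁_of_isUnit {A : Matrix p p R} {B : Matrix p q R} {C : Matrix q p R}
    {D : Matrix q q R} (hA : IsUnit A) (hS : IsUnit (D - C * A⁻¹ * B)) :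
    (fromBlocks A B C D)⁻¹ =
      fromBlocks (A⁻¹ + A⁻¹ * B * (D - C * A⁻¹ * B)⁻¹ * C * A⁻¹)
        (-(A⁻¹ * B * (D - C * A⁻¹ * B)⁻¹)) (-((D - C * A⁻¹ * B)⁻¹ * C * A⁻¹))
        (D - C * A⁻¹ * B)⁻¹ := by
  let := hA.invertible
  let : Invertible (D - C * ⅟A * B) := by
    rw [invOf_eq_nonsing_inv]; exact hS.invertible
  let := fromBlocks₁₁Invertible A B C D
  rw [← invOf_eq_nonsing_inv, invOf_fromBlocks₁₁_eq]
  simp only [invOf_eq_nonsing_inv]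

omit [Fintype q] [DecidableEq q] in
lemma mul_posteriorCov_mul_transpose_add (K : Matrix n n R) (H₁ : Matrix p n R)
    (H₂ : Matrix q n R) (N₁ : Matrix p p R) (N₂ : Matrix q q R) :
    H₂ * posteriorCov K H₁ N₁ * H₂ᵀ + N₂ =
      H₂ * K * H₂ᵀ + N₂ - H₂ * K * H₁ᵀ * (H₁ * K * H₁ᵀ + N₁)⁻¹ * (H₁ * K * H₂ᵀ) := by
  simp only [posteriorCov, Matrix.mul_sub, Matrix.sub_mul, Matrix.mul_assoc]
  abel

theorem posteriorCov_posteriorCov (K : Matrix n n R) (H₁ : Matrix p n R) (H₂ : Matrix q n R)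
    (N₁ : Matrix p p R) (N₂ : Matrix q q R) (h₁ : IsUnit (H₁ * K * H₁ᵀ + N₁))
    (h₂ : IsUnit (H₂ * posteriorCov K H₁ N₁ * H₂ᵀ + N₂)) :
    posteriorCov (posteriorCov K H₁ N₁) H₂ N₂ =
      posteriorCov K (fromRows H₁ H₂) (fromBlocks N₁ 0 0 N₂) := by
  rw [mul_posteriorCov_mul_transpose_add] at h₂
  rw [posteriorCov.eq_1 (posteriorCov K H₁ N₁), posteriorCov.eq_1 K (fromRows H₁ H₂),
    fromRows_mul_mul_transpose_add_fromBlocks, inv_fromBlocks₁₁_of_isUnit h₁ h₂,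
    ← mul_posteriorCov_mul_transpose_add, transpose_fromRows]
  simp only [posteriorCov, mul_fromCols, fromCols_mul_fromBlocks, fromCols_mul_fromRows]
  generalize (H₁ * K * H₁ᵀ + N₁)⁻¹ = A
  generalize (H₂ * (K - K * H₁ᵀ * A * H₁ * K) * H₂ᵀ + N₂)⁻¹ = S
  simp only [Matrix.mul_sub, Matrix.sub_mul, Matrix.mul_add, Matrix.add_mul, Matrix.mul_neg,
    Matrix.neg_mul, Matrix.mul_assoc]
  abel

end Algebra

section Positivity

variable {n p : Type*} [Fintype n] [Fintype p] [DecidableEq p]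

omit [DecidableEq p] in
lemma Matrix.PosSemidef.posDef_mul_mul_transpose_add {K : Matrix n n ℝ} (hK : K.PosSemidef)
    (H : Matrix p n ℝ) {N : Matrix p p ℝ} (hN : N.PosDef) : (H * K * Hᵀ + N).PosDef := by
  simpa using hN.posSemidef_add (hK.mul_mul_conjTranspose_same H)

lemma Matrix.PosSemidef.posteriorCov [DecidableEq n] {K : Matrix n n ℝ} (hK : K.PosSemidef)
    (H : Matrix p n ℝ) {N : Matrix p p ℝ} (hN : N.PosDef) : (posteriorCov K H N).PosSemidef := by
  have hD := hK.posDef_mul_mul_transpose_add H hN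
  let := hD.isUnit.invertible
  have hHK : (K * Hᵀ)ᴴ = H * K := by
    rw [conjTranspose_mul, hK.1.eq, conjTranspose_eq_transpose_of_trivial, transpose_transpose]
  have hM : (fromBlocks K (K * Hᵀ) (K * Hᵀ)ᴴ (H * K * Hᵀ + N)).PosSemidef := by
    have h0N : (fromBlocks 0 0 0 N : Matrix (n ⊕ p) (n ⊕ p) ℝ).PosSemidef := by
      have := hN.posSemidef.mul_mul_conjTranspose_same
        (fromRows (0 : Matrix n p ℝ) (1 : Matrix p p ℝ))
      rw [conjTranspose_eq_transpose_of_trivial, transpose_fromRows, fromRows_mul,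
        fromRows_mul_fromCols] at this
      simpa using this
    have := (hK.mul_mul_conjTranspose_same (fromRows (1 : Matrix n n ℝ) H)).add h0N
    rw [conjTranspose_eq_transpose_of_trivial, fromRows_mul_mul_transpose_add_fromBlocks] at this
    rw [hHK]
    simpa using this
  have := (PosDef.fromBlocks₂₂ K (K * Hᵀ) hD).1 hM
  rwa [hHK, ← Matrix.mul_assoc] at this

end Positivity

/-- Sequential update formula for covariances: conditioning on two blocks of
observations sequentially yields the same covariance as conditioning on them jointly, where
`G = [G₁; G₂]` is the vertical concatenation. -/
theorem stmt_4 {m p₁ p₂ : ℕ} (K₀ : Matrix (Fin m) (Fin m) ℝ) (hK₀ : K₀.PosSemidef)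
    (G₁ : Matrix (Fin p₁) (Fin m) ℝ) (G₂ : Matrix (Fin p₂) (Fin m) ℝ)
    (τ : ℝ) (hτ : 0 < τ)
    (K₁ K₂ : Matrix (Fin m) (Fin m) ℝ)
    (hK₁ : K₁ = K₀ - K₀ * G₁ᵀ * (G₁ * K₀ * G₁ᵀ + τ ^ 2 • 1)⁻¹ * G₁ * K₀)
    (hK₂ : K₂ = K₁ - K₁ * G₂ᵀ * (G₂ * K₁ * G₂ᵀ + τ ^ 2 • 1)⁻¹ * G₂ * K₁)
    (G : Matrix (Fin p₁ ⊕ Fin p₂) (Fin m) ℝ) (hG : G = fromRows G₁ G₂) :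
    K₂ = K₀ - K₀ * Gᵀ * (G * K₀ * Gᵀ + τ ^ 2 • 1)⁻¹ * G * K₀ := by
  subst hK₂ hK₁ hG
  have hnoise : ∀ p : ℕ, (τ ^ 2 • 1 : Matrix (Fin p) (Fin p) ℝ).PosDef :=
    fun _ ↦ PosDef.one.smul (by positivity)
  have hnoise_block : (τ ^ 2 • 1 : Matrix (Fin p₁ ⊕ Fin p₂) (Fin p₁ ⊕ Fin p₂) ℝ) =
      fromBlocks (τ ^ 2 • 1) 0 0 (τ ^ 2 • 1) := by
    rw [← fromBlocks_one, fromBlocks_smul, smul_zero, smul_zero]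
  rw [hnoise_block]
  exact posteriorCov_posteriorCov K₀ G₁ G₂ _ _
    (hK₀.posDef_mul_mul_transpose_add G₁ (hnoise p₁)).isUnit
    ((hK₀.posteriorCov G₁ (hnoise p₁)).posDef_mul_mul_transpose_add G₂ (hnoise p₂)).isUnit
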